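/- arXiv:1904.03350 — 2 statements merged into one kernel-verified Lean document; each statement's English description precedes it below -/
import Mathlib

section
/- For z > 0, the function Φ(x) = z^x (x+1)^{2(x+1)} (x−1)^{2(x−1)} / x^{4x} is strictly decreasing on (1,∞) when 0 < z ≤ 1, with Φ(1) = 16z; indeed φ′(x) = log(x⁴/(z(x²−1)²)) > 0 and φ″(x) = −4/(x(x²−1)) < 0 for x ∈ (1,∞), where φ = −log Φ (extended continuously at x=1). -/
open Real Set

noncomputable def Faux (z : ℝ) : ℝ → ℝ := fun x =>
  x * Real.log z + 2 * ((x + 1) * Real.log (x + 1))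
    + 2 * ((x - 1) * Real.log (x - 1)) - 4 * (x * Real.log x)

lemma Faux_cont (z : ℝ) : Continuous (Faux z) := by
  unfold Faux
  have h1 : Continuous fun x : ℝ => (x + 1) * Real.log (x + 1) :=
    Real.continuous_mul_log.comp (by continuity)
  have h2 : Continuous fun x : ℝ => (x - 1) * Real.log (x - 1) :=
    Real.continuous_mul_log.comp (by continuity)
  have h3 : Continuous fun x : ℝ => x * Real.log x := Real.continuous_mul_log
  exact (((continuous_id.mul continuous_const).add (continuous_const.mul h1)).add
    (continuous_const.mul h2)).sub (continuous_const.mul h3)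

lemma Faux_hasDeriv (z : ℝ) {x : ℝ} (hx : 1 < x) :
    HasDerivAt (Faux z)
      (Real.log z + 2 * Real.log (x + 1) + 2 * Real.log (x - 1) - 4 * Real.log x) x := by
  have h1 : HasDerivAt (fun y : ℝ => y * Real.log z) (1 * Real.log z) x :=
    (hasDerivAt_id x).mul_const _
  have h2 : HasDerivAt (fun y : ℝ => (y + 1) * Real.log (y + 1))
      ((Real.log (x + 1) + 1) * 1) x :=
    (Real.hasDerivAt_mul_log (by linarith : x + 1 ≠ 0)).comp (h₂ := fun y : ℝ => y * Real.log y) x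
      ((hasDerivAt_id x).add_const 1)
  have h3 : HasDerivAt (fun y : ℝ => (y - 1) * Real.log (y - 1))
      ((Real.log (x - 1) + 1) * 1) x :=
    (Real.hasDerivAt_mul_log (by linarith : x - 1 ≠ 0)).comp (h₂ := fun y : ℝ => y * Real.log y) x
      ((hasDerivAt_id x).sub_const 1)
  have h4 : HasDerivAt (fun y : ℝ => y * Real.log y) (Real.log x + 1) x :=
    Real.hasDerivAt_mul_log (by linarith : x ≠ 0)
  have := ((h1.add (h2.const_mul 2)).add (h3.const_mul 2)).sub (h4.const_mul 4)
  refine HasDerivAt.congr_deriv (this.congr_of_eventuallyEq (Filter.Eventually.of_forall fun y => ?_)) ?_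
  · simp only [Faux, Pi.add_apply, Pi.sub_apply]
  ring

theorem phase_example_3 (z : ℝ) (hz0 : 0 < z) (hz1 : z ≤ 1) :
    let Φ : ℝ → ℝ := fun x =>
      z ^ x * (x + 1) ^ (2 * (x + 1)) * (x - 1) ^ (2 * (x - 1)) / x ^ (4 * x)
    let φ : ℝ → ℝ := fun x => -Real.log (Φ x)
    StrictAntiOn Φ (Ici (1 : ℝ)) ∧
    Φ 1 = 16 * z ∧
    (∀ x ∈ Ioi (1 : ℝ),
        deriv φ x = Real.log (x ^ 4 / (z * (x ^ 2 - 1) ^ 2)) ∧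
        0 < Real.log (x ^ 4 / (z * (x ^ 2 - 1) ^ 2))) ∧
    (∀ x ∈ Ioi (1 : ℝ),
        deriv (deriv φ) x = -4 / (x * (x ^ 2 - 1)) ∧ -4 / (x * (x ^ 2 - 1)) < 0) := by
  intro Φ φ
  -- Φ equals exp ∘ Faux on Ici 1
  have hPhi : ∀ x ∈ Ici (1 : ℝ), Φ x = Real.exp (Faux z x) := by
    intro x hx
    have hx1 : (1 : ℝ) ≤ x := hx
    have e1 : z ^ x = Real.exp (x * Real.log z) := by
      rw [Real.rpow_def_of_pos hz0, mul_comm]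
    have e2 : (x + 1) ^ (2 * (x + 1)) = Real.exp (2 * ((x + 1) * Real.log (x + 1))) := by
      rw [Real.rpow_def_of_pos (by linarith)]; ring_nf
    have e3 : (x - 1) ^ (2 * (x - 1)) = Real.exp (2 * ((x - 1) * Real.log (x - 1))) := by
      rcases eq_or_lt_of_le hx1 with h | h
      · simp [← h]
      · rw [Real.rpow_def_of_pos (by linarith)]; ring_nf
    have e4 : x ^ (4 * x) = Real.exp (4 * (x * Real.log x)) := by
      rw [Real.rpow_def_of_pos (by linarith)]; ring_nf
    show z ^ x * (x + 1) ^ (2 * (x + 1)) * (x - 1) ^ (2 * (x - 1)) / x ^ (4 * x) = _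
    rw [e1, e2, e3, e4, ← Real.exp_add, ← Real.exp_add, ← Real.exp_sub]
    rfl
  -- F derivative negative on the interior, via positivity of the log
  have hlogpos : ∀ x : ℝ, 1 < x → 0 < Real.log (x ^ 4 / (z * (x ^ 2 - 1) ^ 2)) := by
    intro x hx
    apply Real.log_pos
    have h3 : (0 : ℝ) < x ^ 2 - 1 := by nlinarith
    rw [one_lt_div (by positivity)]
    nlinarith [sq_nonneg (x ^ 2 - 1), sq_nonneg x]
  have hlogeq : ∀ x : ℝ, 1 < x → Real.log (x ^ 4 / (z * (x ^ 2 - 1) ^ 2))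
      = 4 * Real.log x - Real.log z - 2 * Real.log (x + 1) - 2 * Real.log (x - 1) := by
    intro x hx
    have h1 : (0 : ℝ) < x - 1 := by linarith
    have h2 : (0 : ℝ) < x + 1 := by linarith
    have h3 : (0 : ℝ) < x ^ 2 - 1 := by nlinarith
    have hfac : x ^ 2 - 1 = (x - 1) * (x + 1) := by ring
    rw [Real.log_div (by positivity) (by positivity), Real.log_mul (ne_of_gt hz0)
      (by positivity), Real.log_pow, Real.log_pow, hfac,
      Real.log_mul (ne_of_gt h1) (ne_of_gt h2)]
    push_cast
    ring
  have hanti : StrictAntiOn (Faux z) (Ici (1 : ℝ)) := by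
    apply strictAntiOn_of_deriv_neg (convex_Ici 1) (Faux_cont z).continuousOn
    intro x hx
    rw [interior_Ici] at hx
    rw [(Faux_hasDeriv z hx).deriv]
    have := hlogpos x hx
    rw [hlogeq x hx] at this
    linarith
  refine ⟨?_, ?_, ?_, ?_⟩
  · intro a ha b hb hab
    rw [hPhi a ha, hPhi b hb]
    exact Real.exp_lt_exp.2 (hanti ha hb hab)
  · show z ^ (1:ℝ) * ((1:ℝ) + 1) ^ (2 * ((1:ℝ) + 1)) * ((1:ℝ) - 1) ^ (2 * ((1:ℝ) - 1)) /
      (1:ℝ) ^ (4 * (1:ℝ)) = 16 * z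
    norm_num
    ring
  · intro x hx
    have hx1 : (1 : ℝ) < x := hx
    refine ⟨?_, hlogpos x hx1⟩
    have heq : φ =ᶠ[nhds x] fun y => -Faux z y := by
      filter_upwards [Ioi_mem_nhds hx1] with y hy
      show -Real.log (Φ y) = _
      rw [hPhi y (mem_Ici.2 (le_of_lt (mem_Ioi.1 hy))), Real.log_exp]
    rw [heq.deriv_eq, (show HasDerivAt (fun y => -Faux z y) _ x from (Faux_hasDeriv z hx1).neg).deriv, hlogeq x hx1]
    ring
  · intro x hx
    have hx1 : (1 : ℝ) < x := hx
    have hx0 : (0 : ℝ) < x := by linarith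
    have h3 : (0 : ℝ) < x ^ 2 - 1 := by nlinarith
    constructor
    · have heq : deriv φ =ᶠ[nhds x] fun y =>
          4 * Real.log y - Real.log z - 2 * Real.log (y + 1) - 2 * Real.log (y - 1) := by
        filter_upwards [Ioi_mem_nhds hx1] with y hy
        have hy1 : (1 : ℝ) < y := hy
        have heqy : φ =ᶠ[nhds y] fun t => -Faux z t := by
          filter_upwards [Ioi_mem_nhds hy1] with t ht
          show -Real.log (Φ t) = _
          rw [hPhi t (mem_Ici.2 (le_of_lt (mem_Ioi.1 ht))), Real.log_exp]
        rw [heqy.deriv_eq, (show HasDerivAt (fun t => -Faux z t) _ y from (Faux_hasDeriv z hy1).neg).deriv]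
        ring
      rw [heq.deriv_eq]
      have d1 : HasDerivAt (fun y : ℝ =>
          4 * Real.log y - Real.log z - 2 * Real.log (y + 1) - 2 * Real.log (y - 1))
          (4 * x⁻¹ - 2 * ((x + 1)⁻¹ * 1) - 2 * ((x - 1)⁻¹ * 1)) x := by
        have l1 : HasDerivAt (fun y : ℝ => Real.log y) x⁻¹ x :=
          Real.hasDerivAt_log (by linarith)
        have l2 : HasDerivAt (fun y : ℝ => Real.log (y + 1)) ((x + 1)⁻¹ * 1) x :=
          (Real.hasDerivAt_log (by linarith : x + 1 ≠ 0)).comp (h₂ := Real.log) x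
            ((hasDerivAt_id x).add_const 1)
        have l3 : HasDerivAt (fun y : ℝ => Real.log (y - 1)) ((x - 1)⁻¹ * 1) x :=
          (Real.hasDerivAt_log (by linarith : x - 1 ≠ 0)).comp (h₂ := Real.log) x
            ((hasDerivAt_id x).sub_const 1)
        exact (((l1.const_mul 4).sub_const _).sub (l2.const_mul 2)).sub (l3.const_mul 2)
      rw [d1.deriv]
      have h1 : x - 1 ≠ 0 := by linarith
      have h2 : x + 1 ≠ 0 := by linarith
      field_simp
      ring
    · apply div_neg_of_neg_of_pos (by norm_num)
      positivity
end

section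
/- For complex a, b, c, d with c, d ∉ ℤ_{≤0} and real z with 0 < z < 1 (or z = 1 and Re(a+b−c−d) < −1), the series g₃(n) := Σ_{k≥n}^{∞} Γ(2k+2n+a)Γ(2k−2n+b)/(Γ(2k+c)Γ(2k+d)) · z^k converges absolutely for all n with 2n + Re(b) > 0 avoiding poles, and for every Ψ > 16z there exist K > 0 and N ∈ ℕ such that |g₃(n)| ≤ K·Ψⁿ / min{1, dist(b, ℤ_{≤0})} for all n ≥ N. -/
open Filter Metric

/-- The set of nonpositive integers inside `ℂ`. -/
def nonposInts : Set ℂ := {w : ℂ | ∃ m : ℤ, m ≤ 0 ∧ w = (m : ℂ)}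

set_option maxHeartbeats 1000000

noncomputable def Complex.abs : AbsoluteValue ℂ ℝ :=
  IsAbsoluteValue.toAbsoluteValue (norm : ℂ → ℝ)

lemma Complex.abs_apply_norm (z : ℂ) : Complex.abs z = ‖z‖ := rfl

lemma Complex.abs_natCast (n : ℕ) : Complex.abs (n : ℂ) = n := by
  rw [Complex.abs_apply_norm, Complex.norm_natCast]

lemma Complex.abs_ofReal (r : ℝ) : Complex.abs (r : ℂ) = |r| := by
  rw [Complex.abs_apply_norm, Complex.norm_real, Real.norm_eq_abs]

lemma Complex.sq_abs (z : ℂ) : Complex.abs z ^ 2 = Complex.normSq z := by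
  rw [Complex.abs_apply_norm, Complex.sq_norm]

lemma Complex.abs_re_le_abs (z : ℂ) : |z.re| ≤ Complex.abs z := Complex.abs_re_le_norm z


noncomputable def trm (a b c d : ℂ) (z : ℝ) (n j : ℕ) : ℂ :=
  Complex.Gamma (a + (4*n+2*j : ℕ)) * Complex.Gamma (b + (2*j : ℕ)) /
    (Complex.Gamma (c + (2*n+2*j : ℕ)) * Complex.Gamma (d + (2*n+2*j : ℕ))) * (z:ℂ)^(n+j)

lemma Gamma_add_two (s : ℂ) (h0 : s ≠ 0) (h1 : s + 1 ≠ 0) :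
    Complex.Gamma (s+2) = s*(s+1)*Complex.Gamma s := by
  have h : s+2 = (s+1)+1 := by ring
  rw [h, Complex.Gamma_add_one _ h1, Complex.Gamma_add_one _ h0]; ring

lemma shift_ne {w : ℂ} (hw : ∀ m : ℤ, m ≤ 0 → w ≠ (m : ℂ)) (Y : ℕ) (t : ℕ) :
    w + (Y : ℂ) + (t : ℂ) ≠ 0 := by
  intro h
  apply hw (-(Y+t)) (by omega)
  have : w = -(((Y:ℂ)) + t) := by linear_combination h
  rw [this]; push_cast; ring

lemma shift_Gamma_ne {w : ℂ} (hw : ∀ m : ℤ, m ≤ 0 → w ≠ (m : ℂ)) (Y : ℕ) :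
    Complex.Gamma (w + (Y : ℂ)) ≠ 0 := by
  apply Complex.Gamma_ne_zero
  intro m h
  apply hw (-(m+Y)) (by omega)
  have : w = -((m:ℂ) + Y) := by linear_combination h
  rw [this]; push_cast; ring


lemma stepGenJ (a b c d X Y Z p w : ℂ)
    (ha0 : a + X ≠ 0) (ha1 : a + X + 1 ≠ 0) (hb0 : b + Z ≠ 0) (hb1 : b + Z + 1 ≠ 0)
    (hc0 : c + Y ≠ 0) (hc1 : c + Y + 1 ≠ 0) (hd0 : d + Y ≠ 0) (hd1 : d + Y + 1 ≠ 0)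
    (hgc : Complex.Gamma (c + Y) ≠ 0) (hgd : Complex.Gamma (d + Y) ≠ 0) :
    Complex.Gamma (a + X + 2) * Complex.Gamma (b + Z + 2) /
        (Complex.Gamma (c + Y + 2) * Complex.Gamma (d + Y + 2)) * (p * w) *
      ((c + Y) * (c + Y + 1) * ((d + Y) * (d + Y + 1))) =
    Complex.Gamma (a + X) * Complex.Gamma (b + Z) /
        (Complex.Gamma (c + Y) * Complex.Gamma (d + Y)) * p *
      ((a + X) * (a + X + 1) * ((b + Z) * (b + Z + 1))) * w := by
  rw [Gamma_add_two _ ha0 ha1, Gamma_add_two _ hb0 hb1, Gamma_add_two _ hc0 hc1,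
    Gamma_add_two _ hd0 hd1]
  field_simp

lemma stepGenN (a b c d X Y Z p w : ℂ)
    (ha0 : a + X ≠ 0) (ha1 : a + X + 1 ≠ 0) (ha2 : a + X + 2 ≠ 0) (ha3 : a + X + 3 ≠ 0)
    (hc0 : c + Y ≠ 0) (hc1 : c + Y + 1 ≠ 0) (hd0 : d + Y ≠ 0) (hd1 : d + Y + 1 ≠ 0)
    (hgc : Complex.Gamma (c + Y) ≠ 0) (hgd : Complex.Gamma (d + Y) ≠ 0) :
    Complex.Gamma (a + X + 4) * Complex.Gamma (b + Z) /
        (Complex.Gamma (c + Y + 2) * Complex.Gamma (d + Y + 2)) * (p * w) *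
      ((c + Y) * (c + Y + 1) * ((d + Y) * (d + Y + 1))) =
    Complex.Gamma (a + X) * Complex.Gamma (b + Z) /
        (Complex.Gamma (c + Y) * Complex.Gamma (d + Y)) * p *
      ((a + X) * (a + X + 1) * ((a + X + 2) * (a + X + 3))) * w := by
  have e : a + X + 4 = (a + X + 2) + 2 := by ring
  have ha2' : (a + X + 2) + 1 ≠ 0 := by intro h; exact ha3 (by linear_combination h)
  rw [e, Gamma_add_two _ ha2 ha2', Gamma_add_two _ ha0 ha1, Gamma_add_two _ hc0 hc1,
    Gamma_add_two _ hd0 hd1]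
  field_simp
  ring

lemma shift_ne' {w : ℂ} (hw : ∀ m : ℤ, m ≤ 0 → w ≠ (m : ℂ)) (Y : ℕ) :
    w + (Y : ℂ) ≠ 0 := by
  have := shift_ne hw Y 0; simpa using this

lemma shift_ne1 {w : ℂ} (hw : ∀ m : ℤ, m ≤ 0 → w ≠ (m : ℂ)) (Y : ℕ) :
    w + (Y : ℂ) + 1 ≠ 0 := by
  have := shift_ne hw Y 1; simpa using this

lemma stepJ (a b c d : ℂ) (z : ℝ)
    (hb : ∀ m : ℤ, m ≤ 0 → b ≠ (m : ℂ)) (hc : ∀ m : ℤ, m ≤ 0 → c ≠ (m : ℂ))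
    (hd : ∀ m : ℤ, m ≤ 0 → d ≠ (m : ℂ)) (n j : ℕ)
    (ha0 : a + ((4*n+2*j : ℕ) : ℂ) ≠ 0) (ha1 : a + ((4*n+2*j : ℕ) : ℂ) + 1 ≠ 0) :
    trm a b c d z n (j+1) *
      ((c + ((2*n+2*j:ℕ):ℂ)) * (c + ((2*n+2*j:ℕ):ℂ) + 1) *
       ((d + ((2*n+2*j:ℕ):ℂ)) * (d + ((2*n+2*j:ℕ):ℂ) + 1))) =
    trm a b c d z n j *
      ((a + ((4*n+2*j:ℕ):ℂ)) * (a + ((4*n+2*j:ℕ):ℂ) + 1) *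
       ((b + ((2*j:ℕ):ℂ)) * (b + ((2*j:ℕ):ℂ) + 1))) * (z:ℂ) := by
  have e1 : a + ((4*n+2*(j+1) : ℕ) : ℂ) = a + ((4*n+2*j:ℕ):ℂ) + 2 := by push_cast; ring
  have e2 : b + ((2*(j+1) : ℕ) : ℂ) = b + ((2*j:ℕ):ℂ) + 2 := by push_cast; ring
  have e3 : c + ((2*n+2*(j+1) : ℕ) : ℂ) = c + ((2*n+2*j:ℕ):ℂ) + 2 := by push_cast; ring
  have e4 : d + ((2*n+2*(j+1) : ℕ) : ℂ) = d + ((2*n+2*j:ℕ):ℂ) + 2 := by push_cast; ring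
  have epow : ((z:ℂ))^(n+(j+1)) = (z:ℂ)^(n+j) * z := by
    rw [show n + (j+1) = (n+j)+1 from rfl, pow_succ]
  unfold trm
  rw [e1, e2, e3, e4, epow]
  exact stepGenJ a b c d _ _ _ _ _ ha0 ha1 (shift_ne' hb _) (shift_ne1 hb _)
    (shift_ne' hc _) (shift_ne1 hc _) (shift_ne' hd _) (shift_ne1 hd _)
    (shift_Gamma_ne hc _) (shift_Gamma_ne hd _)

lemma stepN (a b c d : ℂ) (z : ℝ)
    (hc : ∀ m : ℤ, m ≤ 0 → c ≠ (m : ℂ)) (hd : ∀ m : ℤ, m ≤ 0 → d ≠ (m : ℂ)) (n j : ℕ)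
    (ha0 : a + ((4*n+2*j : ℕ) : ℂ) ≠ 0) (ha1 : a + ((4*n+2*j : ℕ) : ℂ) + 1 ≠ 0)
    (ha2 : a + ((4*n+2*j : ℕ) : ℂ) + 2 ≠ 0) (ha3 : a + ((4*n+2*j : ℕ) : ℂ) + 3 ≠ 0) :
    trm a b c d z (n+1) j *
      ((c + ((2*n+2*j:ℕ):ℂ)) * (c + ((2*n+2*j:ℕ):ℂ) + 1) *
       ((d + ((2*n+2*j:ℕ):ℂ)) * (d + ((2*n+2*j:ℕ):ℂ) + 1))) =
    trm a b c d z n j *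
      ((a + ((4*n+2*j:ℕ):ℂ)) * (a + ((4*n+2*j:ℕ):ℂ) + 1) *
       ((a + ((4*n+2*j:ℕ):ℂ) + 2) * (a + ((4*n+2*j:ℕ):ℂ) + 3))) * (z:ℂ) := by
  have e1 : a + ((4*(n+1)+2*j : ℕ) : ℂ) = a + ((4*n+2*j:ℕ):ℂ) + 4 := by push_cast; ring
  have e3 : c + ((2*(n+1)+2*j : ℕ) : ℂ) = c + ((2*n+2*j:ℕ):ℂ) + 2 := by push_cast; ring
  have e4 : d + ((2*(n+1)+2*j : ℕ) : ℂ) = d + ((2*n+2*j:ℕ):ℂ) + 2 := by push_cast; ring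
  have epow : ((z:ℂ))^((n+1)+j) = (z:ℂ)^(n+j) * z := by
    rw [show (n+1) + j = (n+j)+1 by omega, pow_succ]
  unfold trm
  rw [e1, e3, e4, epow]
  exact stepGenN a b c d _ _ _ _ _ ha0 ha1 ha2 ha3
    (shift_ne' hc _) (shift_ne1 hc _) (shift_ne' hd _) (shift_ne1 hd _)
    (shift_Gamma_ne hc _) (shift_Gamma_ne hd _)


noncomputable def Pj (a b : ℂ) (n j : ℕ) : ℝ :=
  Complex.abs (a + ((4*n+2*j:ℕ):ℂ)) * Complex.abs (a + ((4*n+2*j:ℕ):ℂ) + 1) *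
    (Complex.abs (b + ((2*j:ℕ):ℂ)) * Complex.abs (b + ((2*j:ℕ):ℂ) + 1))

noncomputable def Pn (a : ℂ) (n j : ℕ) : ℝ :=
  Complex.abs (a + ((4*n+2*j:ℕ):ℂ)) * Complex.abs (a + ((4*n+2*j:ℕ):ℂ) + 1) *
    (Complex.abs (a + ((4*n+2*j:ℕ):ℂ) + 2) * Complex.abs (a + ((4*n+2*j:ℕ):ℂ) + 3))

noncomputable def Qd (c d : ℂ) (n j : ℕ) : ℝ :=
  Complex.abs (c + ((2*n+2*j:ℕ):ℂ)) * Complex.abs (c + ((2*n+2*j:ℕ):ℂ) + 1) *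
    (Complex.abs (d + ((2*n+2*j:ℕ):ℂ)) * Complex.abs (d + ((2*n+2*j:ℕ):ℂ) + 1))

lemma absStepJ (a b c d : ℂ) (z : ℝ) (hz : 0 ≤ z)
    (hb : ∀ m : ℤ, m ≤ 0 → b ≠ (m : ℂ)) (hc : ∀ m : ℤ, m ≤ 0 → c ≠ (m : ℂ))
    (hd : ∀ m : ℤ, m ≤ 0 → d ≠ (m : ℂ)) (n j : ℕ)
    (ha0 : a + ((4*n+2*j : ℕ) : ℂ) ≠ 0) (ha1 : a + ((4*n+2*j : ℕ) : ℂ) + 1 ≠ 0) :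
    Complex.abs (trm a b c d z n (j+1)) * Qd c d n j =
      Complex.abs (trm a b c d z n j) * Pj a b n j * z := by
  have h := congrArg Complex.abs (stepJ a b c d z hb hc hd n j ha0 ha1)
  simpa [map_mul, Qd, Pj, Complex.abs_ofReal, abs_of_nonneg hz, mul_assoc] using h

lemma absStepN (a b c d : ℂ) (z : ℝ) (hz : 0 ≤ z)
    (hc : ∀ m : ℤ, m ≤ 0 → c ≠ (m : ℂ)) (hd : ∀ m : ℤ, m ≤ 0 → d ≠ (m : ℂ)) (n j : ℕ)
    (ha0 : a + ((4*n+2*j : ℕ) : ℂ) ≠ 0) (ha1 : a + ((4*n+2*j : ℕ) : ℂ) + 1 ≠ 0)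
    (ha2 : a + ((4*n+2*j : ℕ) : ℂ) + 2 ≠ 0) (ha3 : a + ((4*n+2*j : ℕ) : ℂ) + 3 ≠ 0) :
    Complex.abs (trm a b c d z (n+1) j) * Qd c d n j =
      Complex.abs (trm a b c d z n j) * Pn a n j * z := by
  have h := congrArg Complex.abs (stepN a b c d z hc hd n j ha0 ha1 ha2 ha3)
  simpa [map_mul, Qd, Pn, Complex.abs_ofReal, abs_of_nonneg hz, mul_assoc] using h

lemma le_of_step {x y P Q θ z : ℝ} (hQ : 0 < Q) (h : x * Q = y * P * z)
    (hP : P * z ≤ θ * Q) (hy : 0 ≤ y) : x ≤ θ * y := by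
  have h2 : y * (P * z) ≤ y * (θ * Q) := mul_le_mul_of_nonneg_left hP hy
  nlinarith

-- generic shift bounds (nat shifts)
lemma gUp (w : ℂ) (Y t : ℕ) :
    Complex.abs (w + (Y:ℂ) + (t:ℂ)) ≤ Complex.abs w + Y + t := by
  calc Complex.abs (w + (Y:ℂ) + (t:ℂ)) ≤ Complex.abs w + Complex.abs ((Y:ℂ) + t) := by
        simpa [add_assoc] using Complex.abs.add_le w ((Y:ℂ) + t)
    _ = Complex.abs w + Y + t := by
        rw [add_assoc]
        congr 1
        rw [show ((Y:ℂ) + t) = (((Y+t:ℕ)):ℂ) by push_cast; ring, Complex.abs_natCast]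
        push_cast; ring

lemma gLow (w : ℂ) (Y t : ℕ) :
    (Y:ℝ) + t - Complex.abs w ≤ Complex.abs (w + (Y:ℂ) + (t:ℂ)) := by
  have h : Complex.abs ((Y:ℂ) + t) ≤ Complex.abs (w + (Y:ℂ) + t) + Complex.abs w := by
    calc Complex.abs ((Y:ℂ) + t) = Complex.abs ((w + (Y:ℂ) + t) + (-w)) := by ring_nf
      _ ≤ Complex.abs (w + (Y:ℂ) + t) + Complex.abs (-w) := Complex.abs.add_le _ _
      _ = Complex.abs (w + (Y:ℂ) + t) + Complex.abs w := by rw [Complex.abs.map_neg]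
  have e : Complex.abs ((Y:ℂ) + t) = (Y:ℝ) + t := by
    rw [show ((Y:ℂ) + t) = (((Y+t:ℕ)):ℂ) by push_cast; ring, Complex.abs_natCast]
    push_cast; ring
  linarith [e ▸ h]

lemma shift_ne_zero (w : ℂ) (X t : ℕ) (h : Complex.abs w < X) :
    w + (X:ℂ) + (t:ℂ) ≠ 0 := by
  intro h0
  have := gLow w X t
  rw [h0] at this
  simp at this
  have ht : (0:ℝ) ≤ t := Nat.cast_nonneg t
  linarith

lemma lemA (a b c d : ℂ) (z : ℝ) (hz : 0 < z)
    (hc : ∀ m : ℤ, m ≤ 0 → c ≠ (m : ℂ)) (hd : ∀ m : ℤ, m ≤ 0 → d ≠ (m : ℂ))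
    (r : ℝ) (hr : 16 * z < r) :
    ∃ N₀ : ℕ, ∀ n, N₀ ≤ n → ∀ j,
      Complex.abs (trm a b c d z (n+1) j) ≤ r * Complex.abs (trm a b c d z n j) := by
  set A := Complex.abs a with hA
  set M := max (Complex.abs c) (Complex.abs d) with hM
  set u : ℝ := min 1 ((r - 16*z)/(240*z)) with hu
  have hu0 : 0 < u := lt_min one_pos (div_pos (by linarith) (by positivity))
  have hu1 : u ≤ 1 := min_le_left _ _
  have h16 : 16 * z * (1+u)^4 ≤ r := by
    have hq2 : u^2 ≤ u := by nlinarith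
    have hq3 : u^3 ≤ u := by nlinarith
    have hq4 : u^4 ≤ u := by nlinarith
    have h1 : (1+u)^4 ≤ 1 + 15*u := by nlinarith
    have h2 : u ≤ (r - 16*z)/(240*z) := min_le_right _ _
    have h3 : 240 * z * u ≤ r - 16*z := by
      have := mul_le_mul_of_nonneg_left h2 (le_of_lt (show (0:ℝ) < 240*z by positivity))
      rwa [mul_div_cancel₀] at this
      positivity
    nlinarith
  obtain ⟨N₀, hN₁, hN₂, hN₃⟩ : ∃ N₀ : ℕ, A + 2*M + 3 ≤ u * N₀ ∧ M + 1 ≤ N₀ ∧ A < N₀ := by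
    refine ⟨⌈(A + 2*M + 3)/u⌉₊ + ⌈M⌉₊ + ⌈A⌉₊ + 1, ?_, ?_, ?_⟩
    · have h1 : (A + 2*M + 3)/u ≤ ⌈(A + 2*M + 3)/u⌉₊ := Nat.le_ceil _
      have h2 : ((⌈(A + 2*M + 3)/u⌉₊ : ℕ):ℝ) ≤ ((⌈(A + 2*M + 3)/u⌉₊ + ⌈M⌉₊ + ⌈A⌉₊ + 1 : ℕ):ℝ) :=
        Nat.cast_le.mpr (by omega)
      have h3 := (div_le_iff₀ hu0).mp (le_trans h1 h2)
      nlinarith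
    · have : M ≤ ⌈M⌉₊ := Nat.le_ceil _
      push_cast; linarith
    · have : A ≤ ⌈A⌉₊ := Nat.le_ceil _
      push_cast; linarith
  clear_value u
  refine ⟨N₀, fun n hn j => ?_⟩
  have hnN : (N₀:ℝ) ≤ (n:ℝ) := Nat.cast_le.mpr hn
  have castX : ((4*n+2*j:ℕ):ℝ) = 4*(n:ℝ)+2*(j:ℝ) := by push_cast; ring
  have castY : ((2*n+2*j:ℕ):ℝ) = 2*(n:ℝ)+2*(j:ℝ) := by push_cast; ring
  have hj0 : (0:ℝ) ≤ (j:ℝ) := Nat.cast_nonneg j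
  have hn0 : (0:ℝ) ≤ (n:ℝ) := Nat.cast_nonneg n
  have hA0 : 0 ≤ A := Complex.abs.nonneg a
  have hM0 : 0 ≤ M := le_trans (Complex.abs.nonneg c) (le_max_left _ _)
  have hAn : A < ((4*n+2*j:ℕ):ℝ) := by rw [castX]; nlinarith
  have ha0 : a + ((4*n+2*j:ℕ):ℂ) ≠ 0 := by simpa using shift_ne_zero a (4*n+2*j) 0 hAn
  have ha1 : a + ((4*n+2*j:ℕ):ℂ) + 1 ≠ 0 := by simpa using shift_ne_zero a (4*n+2*j) 1 hAn
  have ha2 : a + ((4*n+2*j:ℕ):ℂ) + 2 ≠ 0 := by simpa using shift_ne_zero a (4*n+2*j) 2 hAn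
  have ha3 : a + ((4*n+2*j:ℕ):ℂ) + 3 ≠ 0 := by simpa using shift_ne_zero a (4*n+2*j) 3 hAn
  have step := absStepN a b c d z hz.le hc hd n j ha0 ha1 ha2 ha3
  have hMY : M + 1 ≤ ((2*n+2*j:ℕ):ℝ) := by rw [castY]; nlinarith
  set W : ℝ := ((2*n+2*j:ℕ):ℝ) - M with hW
  have hW0 : (0:ℝ) < W := by rw [hW]; linarith
  have hW0' : (0:ℝ) ≤ W := hW0.le
  have hcM : Complex.abs c ≤ M := le_max_left _ _
  have hdM : Complex.abs d ≤ M := le_max_right _ _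
  have qc0 : W ≤ Complex.abs (c + ((2*n+2*j:ℕ):ℂ)) := by
    have := gLow c (2*n+2*j) 0
    simp only [Nat.cast_zero, add_zero] at this
    linarith
  have qc1 : W ≤ Complex.abs (c + ((2*n+2*j:ℕ):ℂ) + 1) := by
    have := gLow c (2*n+2*j) 1
    simp only [Nat.cast_one] at this
    linarith
  have qd0 : W ≤ Complex.abs (d + ((2*n+2*j:ℕ):ℂ)) := by
    have := gLow d (2*n+2*j) 0
    simp only [Nat.cast_zero, add_zero] at this
    linarith
  have qd1 : W ≤ Complex.abs (d + ((2*n+2*j:ℕ):ℂ) + 1) := by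
    have := gLow d (2*n+2*j) 1
    simp only [Nat.cast_one] at this
    linarith
  have hQW : W^4 ≤ Qd c d n j := by
    rw [Qd, show W^4 = W*W*(W*W) by ring]
    gcongr <;> first | assumption | positivity
  have hQ0 : 0 < Qd c d n j := lt_of_lt_of_le (pow_pos hW0 4) hQW
  set V : ℝ := ((4*n+2*j:ℕ):ℝ) + 3 + A with hV
  have p0 : Complex.abs (a + ((4*n+2*j:ℕ):ℂ)) ≤ V := by
    have := gUp a (4*n+2*j) 0
    simp only [Nat.cast_zero, add_zero] at this
    rw [hV]; linarith
  have p1 : Complex.abs (a + ((4*n+2*j:ℕ):ℂ) + 1) ≤ V := by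
    have := gUp a (4*n+2*j) 1
    simp only [Nat.cast_one] at this
    rw [hV]; linarith
  have p2 : Complex.abs (a + ((4*n+2*j:ℕ):ℂ) + 2) ≤ V := by
    have := gUp a (4*n+2*j) 2
    simp only [Nat.cast_ofNat] at this
    rw [hV]; linarith
  have p3 : Complex.abs (a + ((4*n+2*j:ℕ):ℂ) + 3) ≤ V := by
    have := gUp a (4*n+2*j) 3
    simp only [Nat.cast_ofNat] at this
    rw [hV]; linarith
  have hV0 : (0:ℝ) ≤ V := by
    rw [hV]
    have : (0:ℝ) ≤ ((4*n+2*j:ℕ):ℝ) := Nat.cast_nonneg _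
    linarith
  have hPX : Pn a n j ≤ V^4 := by
    rw [Pn, show V^4 = V*V*(V*V) by ring]
    gcongr <;> first | assumption | positivity
  have hXW : V ≤ 2*(1+u)*W := by
    rw [hV, hW, castX, castY]
    have h2 : u * (N₀:ℝ) ≤ u * (n:ℝ) := mul_le_mul_of_nonneg_left hnN hu0.le
    have hMn : M ≤ (n:ℝ) := by linarith
    have f1 : A+2*M+3 ≤ u*(n:ℝ) := le_trans hN₁ h2
    have f2 : u*M ≤ u*(n:ℝ) := mul_le_mul_of_nonneg_left hMn hu0.le
    have f3 : (0:ℝ) ≤ u*(j:ℝ) := mul_nonneg hu0.le hj0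
    have f4 : (0:ℝ) ≤ u*(n:ℝ) := mul_nonneg hu0.le hn0
    linarith
  have hkey : Pn a n j * z ≤ r * Qd c d n j := by
    calc Pn a n j * z ≤ V^4 * z := mul_le_mul_of_nonneg_right hPX hz.le
      _ ≤ (2*(1+u)*W)^4 * z :=
          mul_le_mul_of_nonneg_right (pow_le_pow_left₀ hV0 hXW 4) hz.le
      _ = 16*z*(1+u)^4 * W^4 := by ring
      _ ≤ r * W^4 := mul_le_mul_of_nonneg_right h16 (pow_nonneg hW0' 4)
      _ ≤ r * Qd c d n j := mul_le_mul_of_nonneg_left hQW (by linarith)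
  exact le_of_step hQ0 step hkey (Complex.abs.nonneg _)


-- core: |w + m| - m → Re w
lemma abs_diff_tendsto (w : ℂ) :
    Tendsto (fun m : ℕ => Complex.abs (w + m) - m) atTop (nhds w.re) := by
  have key : ∀ᶠ m : ℕ in atTop,
      Complex.abs (w + m) - m - w.re = w.im^2 / (Complex.abs (w + m) + m + w.re) ∧
      (m:ℝ) ≤ Complex.abs (w + m) + m + w.re := by
    filter_upwards [eventually_ge_atTop (⌈2 * Complex.abs w⌉₊ + 1)] with m hm
    have hm2 : 2 * Complex.abs w < (m:ℝ) := by
      have h1 : (2 * Complex.abs w) ≤ ⌈2 * Complex.abs w⌉₊ := Nat.le_ceil _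
      have h2 : ((⌈2 * Complex.abs w⌉₊ + 1 : ℕ):ℝ) ≤ m := Nat.cast_le.mpr hm
      push_cast at h2; linarith
    have hre : |w.re| ≤ Complex.abs w := Complex.abs_re_le_abs w
    have hlow : (m:ℝ) - Complex.abs w ≤ Complex.abs (w + m) := by
      have h : Complex.abs ((m:ℂ)) ≤ Complex.abs (w + m) + Complex.abs w := by
        calc Complex.abs ((m:ℂ)) = Complex.abs ((w + m) + (-w)) := by ring_nf
          _ ≤ Complex.abs (w + m) + Complex.abs (-w) := Complex.abs.add_le _ _
          _ = Complex.abs (w + m) + Complex.abs w := by rw [Complex.abs.map_neg]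
      rw [Complex.abs_natCast] at h; linarith
    have hden : (m:ℝ) ≤ Complex.abs (w + m) + m + w.re := by
      cases' abs_le.mp hre with h1 h2
      linarith
    have hdenpos : (0:ℝ) < Complex.abs (w + m) + m + w.re := by
      have h0m : (0:ℝ) < m := by nlinarith [Complex.abs.nonneg w]
      nlinarith [Complex.abs.nonneg w]
    refine ⟨?_, hden⟩
    rw [eq_div_iff (ne_of_gt hdenpos)]
    have hsq : Complex.abs (w + m)^2 = (w.re + m)^2 + w.im^2 := by
      rw [Complex.sq_abs, Complex.normSq_apply]
      simp [Complex.add_re, Complex.add_im]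
      ring
    nlinarith [hsq]
  have h0 : Tendsto (fun m : ℕ => Complex.abs (w + m) - m - w.re) atTop (nhds 0) := by
    have hub : Tendsto (fun m : ℕ => w.im^2 * (1/(m:ℝ))) atTop (nhds 0) := by
      have := tendsto_one_div_atTop_nhds_zero_nat.const_mul (w.im^2)
      simpa using this
    apply tendsto_of_tendsto_of_tendsto_of_le_of_le' tendsto_const_nhds hub
    · filter_upwards [key, eventually_ge_atTop 1] with m hm hm1
      rw [hm.1]
      have h1 : (0:ℝ) < m := by exact_mod_cast hm1
      exact div_nonneg (sq_nonneg _) (by linarith [hm.2])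
    · filter_upwards [key, eventually_ge_atTop 1] with m hm hm1
      rw [hm.1]
      have h1 : (0:ℝ) < m := by exact_mod_cast hm1
      rw [div_le_iff₀ (by linarith [hm.2])]
      have h2 : (0:ℝ) ≤ w.im^2 := sq_nonneg _
      have h3 := hm.2
      calc w.im^2 = w.im^2 * (1/(m:ℝ)) * m := by field_simp
        _ ≤ w.im^2 * (1/(m:ℝ)) * (Complex.abs (w + m) + m + w.re) := by
            apply mul_le_mul_of_nonneg_left h3
            positivity
  have := h0.add_const w.re
  simpa using this

lemma nat_lin_tendsto (u v : ℕ) (hv : 1 ≤ v) :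
    Tendsto (fun j : ℕ => u + v * j) atTop atTop := by
  apply tendsto_atTop_mono (f := fun j : ℕ => j) (fun j => by nlinarith) tendsto_id

lemma comp_diff (w : ℂ) (u v : ℕ) (hv : 1 ≤ v) :
    Tendsto (fun j : ℕ => Complex.abs (w + ((u + v*j : ℕ):ℂ)) - ((u + v*j : ℕ):ℝ))
      atTop (nhds w.re) :=
  (abs_diff_tendsto w).comp (nat_lin_tendsto u v hv)

lemma cast_div_tendsto (u v : ℕ) :
    Tendsto (fun j : ℕ => ((u + v*j : ℕ):ℝ) / (j:ℝ)) atTop (nhds v) := by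
  have h : Tendsto (fun j : ℕ => (u:ℝ) * (1/(j:ℝ)) + v) atTop (nhds ((u:ℝ) * 0 + v)) :=
    (tendsto_one_div_atTop_nhds_zero_nat.const_mul (u:ℝ)).add_const (v:ℝ)
  rw [mul_zero, zero_add] at h
  apply h.congr'
  filter_upwards [eventually_ge_atTop 1] with j hj
  have hj0 : (j:ℝ) ≠ 0 := by positivity
  push_cast
  field_simp

lemma comp_div (w : ℂ) (u v : ℕ) (hv : 1 ≤ v) :
    Tendsto (fun j : ℕ => Complex.abs (w + ((u + v*j : ℕ):ℂ)) / (j:ℝ)) atTop (nhds v) := by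
  have h1 := (comp_diff w u v hv).mul tendsto_one_div_atTop_nhds_zero_nat
  rw [mul_zero] at h1
  have h2 := h1.add (cast_div_tendsto u v)
  rw [zero_add] at h2
  apply h2.congr'
  filter_upwards [eventually_ge_atTop 1] with j hj
  have hj0 : (j:ℝ) ≠ 0 := by positivity
  field_simp
  ring

noncomputable def rho (a b c d : ℂ) (z : ℝ) (n j : ℕ) : ℝ :=
  z * ((Complex.abs (a + ((4*n+2*j:ℕ):ℂ)) / Complex.abs (c + ((2*n+2*j:ℕ):ℂ))) *
       (Complex.abs (a + ((4*n+2*j:ℕ):ℂ) + 1) / Complex.abs (c + ((2*n+2*j:ℕ):ℂ) + 1)) *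
      ((Complex.abs (b + ((2*j:ℕ):ℂ)) / Complex.abs (d + ((2*n+2*j:ℕ):ℂ))) *
       (Complex.abs (b + ((2*j:ℕ):ℂ) + 1) / Complex.abs (d + ((2*n+2*j:ℕ):ℂ) + 1))))

lemma aux_div (f g x : ℝ) (hx : x ≠ 0) : (f/x)/(g/x) = f/g := by
  rcases eq_or_ne g 0 with h|h
  · simp [h]
  · field_simp

lemma aux_mul (f g x : ℝ) (hg : g ≠ 0) : x * (f/g - 1) = (f - g) * (x/g) := by
  field_simp

-- limits of individual quotients
lemma quot_tendsto (w w' : ℂ) (u u' : ℕ) (hww : ∀ j : ℕ, 0 < Complex.abs (w' + ((u' + 2*j:ℕ):ℂ))) :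
    Tendsto (fun j : ℕ =>
      Complex.abs (w + ((u + 2*j:ℕ):ℂ)) / Complex.abs (w' + ((u' + 2*j:ℕ):ℂ)))
      atTop (nhds 1) := by
  have h1 := comp_div w u 2 one_le_two
  have h2 := comp_div w' u' 2 one_le_two
  have h3 := h1.div h2 (by norm_num)
  rw [show ((2:ℕ):ℝ)/((2:ℕ):ℝ) = 1 by norm_num] at h3
  apply h3.congr'
  filter_upwards [eventually_ge_atTop 1] with j hj
  have hj0 : (j:ℝ) ≠ 0 := by positivity
  simp only [Pi.div_apply]
  exact aux_div _ _ _ hj0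

-- difference limit for matched quotients
lemma diff_tendsto (w w' : ℂ) (u u' : ℕ) :
    Tendsto (fun j : ℕ =>
      Complex.abs (w + ((u + 2*j:ℕ):ℂ)) - Complex.abs (w' + ((u' + 2*j:ℕ):ℂ)))
      atTop (nhds (w.re - w'.re + (u:ℝ) - u')) := by
  have h1 := comp_diff w u 2 one_le_two
  have h2 := comp_diff w' u' 2 one_le_two
  have h3 := h1.sub h2
  have h4 := h3.add_const ((u:ℝ) - (u':ℝ))
  have e : w.re - w'.re + ((u:ℝ) - u') = w.re - w'.re + (u:ℝ) - u' := by ring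
  rw [e] at h4
  apply h4.congr
  intro j
  push_cast
  ring

-- j * (quotient - 1) limit
lemma jquot_tendsto (w w' : ℂ) (u u' : ℕ)
    (hww : ∀ j : ℕ, 0 < Complex.abs (w' + ((u' + 2*j:ℕ):ℂ))) :
    Tendsto (fun j : ℕ => (j:ℝ) *
      (Complex.abs (w + ((u + 2*j:ℕ):ℂ)) / Complex.abs (w' + ((u' + 2*j:ℕ):ℂ)) - 1))
      atTop (nhds ((w.re - w'.re + (u:ℝ) - u')/2)) := by
  have h1 := diff_tendsto w w' u u'
  have h2 := comp_div w' u' 2 one_le_two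
  have h3 : Tendsto (fun j : ℕ => (j:ℝ) / Complex.abs (w' + ((u' + 2*j:ℕ):ℂ)))
      atTop (nhds ((2:ℝ))⁻¹) := by
    have h2' : ((2:ℕ):ℝ) ≠ 0 := by norm_num
    have := h2.inv₀ (by norm_num)
    rw [show (((2:ℕ):ℝ))⁻¹ = ((2:ℝ))⁻¹ by norm_num] at this
    apply this.congr
    intro j
    rw [inv_div]
  have h4 := h1.mul h3
  have e : (w.re - w'.re + (u:ℝ) - u') * (2:ℝ)⁻¹ = (w.re - w'.re + (u:ℝ) - u')/2 := by ring
  rw [e] at h4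
  apply h4.congr
  intro j
  exact (aux_mul _ _ _ (hww j).ne').symm

section rholim
variable (a b c d : ℂ) (z : ℝ) (hc : ∀ m : ℤ, m ≤ 0 → c ≠ (m : ℂ))
  (hd : ∀ m : ℤ, m ≤ 0 → d ≠ (m : ℂ)) (n : ℕ)

lemma tendRho (hc : ∀ m : ℤ, m ≤ 0 → c ≠ (m : ℂ)) (hd : ∀ m : ℤ, m ≤ 0 → d ≠ (m : ℂ)) :
    Tendsto (rho a b c d z n) atTop (nhds z) := by
  have hc0 : ∀ j : ℕ, 0 < Complex.abs (c + ((2*n+2*j:ℕ):ℂ)) :=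
    fun j => Complex.abs.pos (shift_ne' hc _)
  have hc1 : ∀ j : ℕ, 0 < Complex.abs (c + ((2*n+2*j:ℕ):ℂ) + 1) :=
    fun j => Complex.abs.pos (shift_ne1 hc _)
  have hd0 : ∀ j : ℕ, 0 < Complex.abs (d + ((2*n+2*j:ℕ):ℂ)) :=
    fun j => Complex.abs.pos (shift_ne' hd _)
  have hd1 : ∀ j : ℕ, 0 < Complex.abs (d + ((2*n+2*j:ℕ):ℂ) + 1) :=
    fun j => Complex.abs.pos (shift_ne1 hd _)
  have q1 := quot_tendsto a c (4*n) (2*n) hc0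
  have q2 : Tendsto (fun j : ℕ =>
      Complex.abs (a + ((4*n+2*j:ℕ):ℂ) + 1) / Complex.abs (c + ((2*n+2*j:ℕ):ℂ) + 1))
      atTop (nhds 1) := by
    have h := quot_tendsto (a+1) (c+1) (4*n) (2*n)
      (fun j => by rw [show (c+1) + ((2*n+2*j:ℕ):ℂ) = c + ((2*n+2*j:ℕ):ℂ) + 1 by ring]; exact hc1 j)
    apply h.congr
    intro j
    rw [show (a+1) + ((4*n+2*j:ℕ):ℂ) = a + ((4*n+2*j:ℕ):ℂ) + 1 by ring,
        show (c+1) + ((2*n+2*j:ℕ):ℂ) = c + ((2*n+2*j:ℕ):ℂ) + 1 by ring]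
  have q3 : Tendsto (fun j : ℕ =>
      Complex.abs (b + ((2*j:ℕ):ℂ)) / Complex.abs (d + ((2*n+2*j:ℕ):ℂ)))
      atTop (nhds 1) := by
    have h := quot_tendsto b d 0 (2*n) hd0
    simpa using h
  have q4 : Tendsto (fun j : ℕ =>
      Complex.abs (b + ((2*j:ℕ):ℂ) + 1) / Complex.abs (d + ((2*n+2*j:ℕ):ℂ) + 1))
      atTop (nhds 1) := by
    have h := quot_tendsto (b+1) (d+1) 0 (2*n)
      (fun j => by rw [show (d+1) + ((2*n+2*j:ℕ):ℂ) = d + ((2*n+2*j:ℕ):ℂ) + 1 by ring]; exact hd1 j)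
    have h2 := h.congr (fun j => by
      rw [show (b+1) + ((0+2*j:ℕ):ℂ) = b + ((0+2*j:ℕ):ℂ) + 1 by ring,
          show (d+1) + ((2*n+2*j:ℕ):ℂ) = d + ((2*n+2*j:ℕ):ℂ) + 1 by ring])
    simpa using h2
  have H := (((q1.mul q2).mul (q3.mul q4)).const_mul z)
  rw [show z * (1 * 1 * (1 * 1)) = z by norm_num] at H
  exact H

lemma tendSig (hc : ∀ m : ℤ, m ≤ 0 → c ≠ (m : ℂ)) (hd : ∀ m : ℤ, m ≤ 0 → d ≠ (m : ℂ))
    (hz1 : z = 1) :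
    Tendsto (fun j : ℕ => (j:ℝ) * (rho a b c d z n j - 1)) atTop
      (nhds ((a + b - c - d).re)) := by
  subst hz1
  have hc0 : ∀ j : ℕ, 0 < Complex.abs (c + ((2*n+2*j:ℕ):ℂ)) :=
    fun j => Complex.abs.pos (shift_ne' hc _)
  have hc1 : ∀ j : ℕ, 0 < Complex.abs (c + ((2*n+2*j:ℕ):ℂ) + 1) :=
    fun j => Complex.abs.pos (shift_ne1 hc _)
  have hd0 : ∀ j : ℕ, 0 < Complex.abs (d + ((2*n+2*j:ℕ):ℂ)) :=
    fun j => Complex.abs.pos (shift_ne' hd _)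
  have hd1 : ∀ j : ℕ, 0 < Complex.abs (d + ((2*n+2*j:ℕ):ℂ) + 1) :=
    fun j => Complex.abs.pos (shift_ne1 hd _)
  have hc1' : ∀ j : ℕ, 0 < Complex.abs ((c+1) + ((2*n+2*j:ℕ):ℂ)) := fun j => by
    rw [show (c+1) + ((2*n+2*j:ℕ):ℂ) = c + ((2*n+2*j:ℕ):ℂ) + 1 by ring]; exact hc1 j
  have hd1' : ∀ j : ℕ, 0 < Complex.abs ((d+1) + ((2*n+2*j:ℕ):ℂ)) := fun j => by
    rw [show (d+1) + ((2*n+2*j:ℕ):ℂ) = d + ((2*n+2*j:ℕ):ℂ) + 1 by ring]; exact hd1 j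
  -- quotient limits
  have q1 := quot_tendsto a c (4*n) (2*n) hc0
  have q2pre := quot_tendsto (a+1) (c+1) (4*n) (2*n) hc1'
  have q3pre := quot_tendsto b d 0 (2*n) hd0
  have q4pre := quot_tendsto (b+1) (d+1) 0 (2*n) hd1'
  -- j-limits
  have j1 := jquot_tendsto a c (4*n) (2*n) hc0
  have j2 := jquot_tendsto (a+1) (c+1) (4*n) (2*n) hc1'
  have j3 := jquot_tendsto b d 0 (2*n) hd0
  have j4 := jquot_tendsto (b+1) (d+1) 0 (2*n) hd1'
  have H := (j1.mul ((q2pre.mul (q3pre.mul q4pre)))).add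
    ((j2.mul (q3pre.mul q4pre)).add ((j3.mul q4pre).add j4))
  have hlim : (a.re - c.re + ((4*n:ℕ):ℝ) - ((2*n:ℕ):ℝ))/2 * (1 * (1 * 1)) +
      (((a+1).re - (c+1).re + ((4*n:ℕ):ℝ) - ((2*n:ℕ):ℝ))/2 * (1 * 1) +
       ((b.re - d.re + ((0:ℕ):ℝ) - ((2*n:ℕ):ℝ))/2 * 1 +
        ((b+1).re - (d+1).re + ((0:ℕ):ℝ) - ((2*n:ℕ):ℝ))/2)) = (a + b - c - d).re := by
    simp only [Complex.add_re, Complex.sub_re, Complex.one_re]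
    push_cast
    ring
  rw [hlim] at H
  apply H.congr
  intro j
  simp only [rho]
  have e1 : ((0+2*j:ℕ):ℂ) = ((2*j:ℕ):ℂ) := by norm_num
  have e2 : (a+1) + ((4*n+2*j:ℕ):ℂ) = a + ((4*n+2*j:ℕ):ℂ) + 1 := by ring
  have e3 : (c+1) + ((2*n+2*j:ℕ):ℂ) = c + ((2*n+2*j:ℕ):ℂ) + 1 := by ring
  have e4 : (b+1) + ((0+2*j:ℕ):ℂ) = b + ((2*j:ℕ):ℂ) + 1 := by rw [e1]; ring
  have e5 : (d+1) + ((2*n+2*j:ℕ):ℂ) = d + ((2*n+2*j:ℕ):ℂ) + 1 := by ring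
  rw [e2, e3, e4, e5, e1]
  push_cast
  ring
end rholim


lemma aux_rho (T f1 f2 f3 f4 g1 g2 g3 g4 z : ℝ) (h1 : g1 ≠ 0) (h2 : g2 ≠ 0)
    (h3 : g3 ≠ 0) (h4 : g4 ≠ 0) :
    T * (f1 * f2 * (f3 * f4)) * z / (g1 * g2 * (g3 * g4)) =
      z * ((f1/g1) * (f2/g2) * ((f3/g3) * (f4/g4))) * T := by
  field_simp

section main
variable {a b c d : ℂ} {z : ℝ}

lemma recEv (hz : 0 ≤ z)
    (hb : ∀ m : ℤ, m ≤ 0 → b ≠ (m : ℂ)) (hc : ∀ m : ℤ, m ≤ 0 → c ≠ (m : ℂ))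
    (hd : ∀ m : ℤ, m ≤ 0 → d ≠ (m : ℂ)) (n : ℕ) :
    ∀ᶠ j in atTop, Complex.abs (trm a b c d z n (j+1)) =
      rho a b c d z n j * Complex.abs (trm a b c d z n j) := by
  filter_upwards [eventually_ge_atTop (⌈Complex.abs a⌉₊ + 1)] with j hj
  have hAj : Complex.abs a < ((4*n+2*j:ℕ):ℝ) := by
    have h1 : Complex.abs a ≤ ⌈Complex.abs a⌉₊ := Nat.le_ceil _
    have h2 : ((⌈Complex.abs a⌉₊ + 1 : ℕ):ℝ) ≤ ((4*n+2*j:ℕ):ℝ) := Nat.cast_le.mpr (by omega)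
    push_cast at h2 ⊢
    linarith
  have ha0 : a + ((4*n+2*j:ℕ):ℂ) ≠ 0 := by simpa using shift_ne_zero a (4*n+2*j) 0 hAj
  have ha1 : a + ((4*n+2*j:ℕ):ℂ) + 1 ≠ 0 := by simpa using shift_ne_zero a (4*n+2*j) 1 hAj
  have step := absStepJ a b c d z hz hb hc hd n j ha0 ha1
  have g1 : Complex.abs (c + ((2*n+2*j:ℕ):ℂ)) ≠ 0 := (Complex.abs.pos (shift_ne' hc _)).ne'
  have g2 : Complex.abs (c + ((2*n+2*j:ℕ):ℂ) + 1) ≠ 0 := (Complex.abs.pos (shift_ne1 hc _)).ne'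
  have g3 : Complex.abs (d + ((2*n+2*j:ℕ):ℂ)) ≠ 0 := (Complex.abs.pos (shift_ne' hd _)).ne'
  have g4 : Complex.abs (d + ((2*n+2*j:ℕ):ℂ) + 1) ≠ 0 := (Complex.abs.pos (shift_ne1 hd _)).ne'
  have hQ : Qd c d n j ≠ 0 := by
    rw [Qd]
    exact mul_ne_zero (mul_ne_zero g1 g2) (mul_ne_zero g3 g4)
  have e1 : Complex.abs (trm a b c d z n (j+1)) =
      Complex.abs (trm a b c d z n j) * Pj a b n j * z / Qd c d n j :=
    (eq_div_iff hQ).mpr step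
  rw [e1, rho, Pj, Qd]
  exact aux_rho _ _ _ _ _ _ _ _ _ _ g1 g2 g3 g4
end main

section summ
variable {a b c d : ℂ} {z : ℝ}

lemma summable_lt1 (hz0 : 0 < z) (hz1 : z < 1)
    (hb : ∀ m : ℤ, m ≤ 0 → b ≠ (m : ℂ)) (hc : ∀ m : ℤ, m ≤ 0 → c ≠ (m : ℂ))
    (hd : ∀ m : ℤ, m ≤ 0 → d ≠ (m : ℂ)) (n : ℕ) :
    Summable (fun j : ℕ => Complex.abs (trm a b c d z n j)) := by
  apply summable_of_ratio_norm_eventually_le (r := (1+z)/2) (by linarith)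
  have h1 := (tendRho a b c d z n hc hd).eventually_le_const
    (show z < (1+z)/2 by linarith)
  filter_upwards [h1, recEv hz0.le hb hc hd n] with j h1 h2
  rw [Real.norm_eq_abs, Real.norm_eq_abs, abs_of_nonneg (Complex.abs.nonneg _),
    abs_of_nonneg (Complex.abs.nonneg _), h2]
  exact mul_le_mul_of_nonneg_right h1 (Complex.abs.nonneg _)

lemma summable_eq1 (hz1 : z = 1) (hs : (a + b - c - d).re < -1)
    (hb : ∀ m : ℤ, m ≤ 0 → b ≠ (m : ℂ)) (hc : ∀ m : ℤ, m ≤ 0 → c ≠ (m : ℂ))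
    (hd : ∀ m : ℤ, m ≤ 0 → d ≠ (m : ℂ)) (n : ℕ) :
    Summable (fun j : ℕ => Complex.abs (trm a b c d z n j)) := by
  set σ : ℝ := (a + b - c - d).re with hσdef
  set q : ℝ := (1 - σ)/2 with hq
  set qt : ℝ := (1 - 3*σ)/4 with hqt
  have hq1 : 1 < q := by rw [hq]; linarith
  have hqqt : q < qt := by rw [hq, hqt]; linarith
  have hqtσ : σ < -qt := by rw [hqt]; linarith
  have hq0 : 0 < q := by linarith
  set f : ℕ → ℝ := fun j => Complex.abs (trm a b c d z n j) with hf
  have hf0 : ∀ j, 0 ≤ f j := fun j => Complex.abs.nonneg _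
  have hz0 : (0:ℝ) ≤ z := by rw [hz1]; norm_num
  clear_value f
  have ev3 : ∀ᶠ j in atTop,
      f (j+1) * (((j:ℝ)+2))^q ≤ f j * ((j:ℝ)+1)^q := by
    have ev1 : ∀ᶠ j : ℕ in atTop, (j:ℝ) * (rho a b c d z n j - 1) ≤ -qt :=
      (tendSig a b c d z n hc hd hz1).eventually_le_const hqtσ
    filter_upwards [ev1, recEv hz0 hb hc hd n,
      eventually_ge_atTop 1] with j h1 h2 hj1
    replace h2 : f (j+1) = rho a b c d z n j * f j := by rw [hf]; exact h2
    have hj0 : (0:ℝ) < j := by exact_mod_cast hj1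
    have hrho1 : rho a b c d z n j ≤ 1 - qt/(j:ℝ) := by
      have h3 : rho a b c d z n j - 1 ≤ (-qt)/(j:ℝ) :=
        (le_div_iff₀ hj0).mpr (by linarith [h1, mul_comm (rho a b c d z n j - 1) (j:ℝ)])
      rw [neg_div] at h3
      linarith
    set x : ℝ := ((j:ℝ)+1)/((j:ℝ)+2) with hx
    have hx0 : 0 < x := by rw [hx]; positivity
    have hlog : -(1/((j:ℝ)+1)) ≤ Real.log x := by
      have hinv : x⁻¹ = ((j:ℝ)+2)/((j:ℝ)+1) := by rw [hx, inv_div]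
      have h4 : Real.log x⁻¹ ≤ x⁻¹ - 1 := Real.log_le_sub_one_of_pos (by rw [hinv]; positivity)
      rw [Real.log_inv] at h4
      have h5 : x⁻¹ - 1 = 1/((j:ℝ)+1) := by rw [hinv]; field_simp; ring
      rw [h5] at h4
      linarith
    have hrpow : 1 - q/((j:ℝ)+1) ≤ x^q := by
      have h6 : q * (-(1/((j:ℝ)+1))) ≤ q * Real.log x :=
        mul_le_mul_of_nonneg_left hlog hq0.le
      have h7 : q * Real.log x + 1 ≤ Real.exp (q * Real.log x) := by
        linarith [Real.add_one_le_exp (q * Real.log x)]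
      have h8 : Real.exp (Real.log x * q) = x^q := (Real.rpow_def_of_pos hx0 q).symm
      rw [mul_comm (Real.log x) q] at h8
      have h9 : q * (-(1/((j:ℝ)+1))) = -(q/((j:ℝ)+1)) := by ring
      rw [h9] at h6
      linarith [h8 ▸ h7]
    have hmid : q/((j:ℝ)+1) ≤ qt/(j:ℝ) := by
      rw [div_le_div_iff₀ (by linarith) hj0]
      nlinarith
    have htrans : rho a b c d z n j ≤ x^q := by linarith
    have hx2 : x^q * ((j:ℝ)+2)^q = ((j:ℝ)+1)^q := by
      rw [hx, Real.div_rpow (by positivity) (by positivity)]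
      field_simp
    rw [h2]
    calc rho a b c d z n j * f j * ((j:ℝ)+2)^q
        ≤ x^q * f j * ((j:ℝ)+2)^q :=
          mul_le_mul_of_nonneg_right (mul_le_mul_of_nonneg_right htrans (hf0 j))
            (Real.rpow_nonneg (by positivity) q)
      _ = f j * ((j:ℝ)+1)^q := by linear_combination (f j) * hx2
  obtain ⟨J₀, hJ⟩ := eventually_atTop.1 ev3
  have hmono : ∀ k, f (J₀+k) * (((J₀+k:ℕ):ℝ)+1)^q ≤ f J₀ * (((J₀:ℕ):ℝ)+1)^q := by
    intro k
    induction k with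
    | zero => simp
    | succ k ih =>
      have h := hJ (J₀+k) (by omega)
      have e : J₀ + (k+1) = (J₀+k)+1 := by omega
      have ecast : (((J₀+k+1:ℕ)):ℝ)+1 = ((J₀+k:ℕ):ℝ)+2 := by push_cast; ring
      rw [e]
      calc f ((J₀+k)+1) * ((((J₀+k)+1:ℕ):ℝ)+1)^q
          = f ((J₀+k)+1) * (((J₀+k:ℕ):ℝ)+2)^q := by rw [ecast]
        _ ≤ f (J₀+k) * (((J₀+k:ℕ):ℝ)+1)^q := h
        _ ≤ _ := ih
  set C : ℝ := f J₀ * (((J₀:ℕ):ℝ)+1)^q with hC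
  have hC0 : 0 ≤ C := mul_nonneg (hf0 _) (Real.rpow_nonneg (by positivity) q)
  have hbound : ∀ k : ℕ, f (k + J₀) ≤ C * ((((k:ℕ):ℝ)+1)^q)⁻¹ := by
    intro k
    have h := hmono k
    have hPpos : (0:ℝ) < (((J₀+k:ℕ):ℝ)+1)^q :=
      Real.rpow_pos_of_pos (by positivity) q
    have hP'pos : (0:ℝ) < (((k:ℕ):ℝ)+1)^q := Real.rpow_pos_of_pos (by positivity) q
    have hPP' : (((k:ℕ):ℝ)+1)^q ≤ (((J₀+k:ℕ):ℝ)+1)^q := by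
      apply Real.rpow_le_rpow (by positivity) _ hq0.le
      push_cast
      linarith [Nat.cast_nonneg (α := ℝ) J₀]
    have h2 : f (J₀+k) ≤ C / (((J₀+k:ℕ):ℝ)+1)^q := (le_div_iff₀ hPpos).mpr h
    have h3 : C / (((J₀+k:ℕ):ℝ)+1)^q ≤ C / (((k:ℕ):ℝ)+1)^q :=
      div_le_div_of_nonneg_left hC0 hP'pos hPP'
    rw [show k + J₀ = J₀ + k by omega]
    have h4 : C / ((((k:ℕ):ℝ)+1)^q) = C * (((((k:ℕ):ℝ)+1)^q))⁻¹ := div_eq_mul_inv _ _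
    linarith
  have base : Summable (fun m : ℕ => (m:ℝ)^(-q)) := Real.summable_nat_rpow.mpr (by linarith)
  have shift : Summable (fun k : ℕ => ((k+1:ℕ):ℝ)^(-q)) := (summable_nat_add_iff 1).mpr base
  have shift2 : Summable (fun k : ℕ => C * ((((k:ℕ):ℝ)+1)^q)⁻¹) := by
    apply Summable.mul_left
    apply shift.congr
    intro k
    rw [Real.rpow_neg (by positivity)]
    push_cast
    ring_nf
  have S1 : Summable (fun k : ℕ => f (k + J₀)) :=
    Summable.of_nonneg_of_le (fun k => hf0 _) hbound shift2
  exact (summable_nat_add_iff J₀).mp S1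

lemma rho_nonneg (n j : ℕ) (hz : 0 ≤ z) : 0 ≤ rho a b c d z n j := by
  rw [rho]; positivity

end summ


lemma nonposInts_closed : IsClosed nonposInts := by
  have h1 := (Complex.isometry_ofReal.isClosedEmbedding).comp Int.isClosedEmbedding_coe_real
  have h2 : nonposInts = (fun m : ℤ => ((m:ℝ):ℂ)) '' {m : ℤ | m ≤ 0} := by
    ext w
    constructor
    · rintro ⟨m, hm, rfl⟩
      exact ⟨m, hm, by push_cast; ring⟩
    · rintro ⟨m, hm, rfl⟩
      exact ⟨m, hm, by push_cast; ring⟩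
  rw [h2]
  exact h1.isClosedMap _ (isClosed_discrete _)

lemma infDist_nonposInts_pos {b : ℂ} (hb : ∀ m : ℤ, m ≤ 0 → b ≠ (m : ℂ)) :
    0 < infDist b nonposInts := by
  have hne : nonposInts.Nonempty := ⟨0, 0, le_refl 0, by norm_num⟩
  rw [← nonposInts_closed.notMem_iff_infDist_pos hne]
  rintro ⟨m, hm, rfl⟩
  exact hb m hm rfl

theorem g3_estimate (a b c d : ℂ) (z : ℝ)
    (hb : ∀ m : ℤ, m ≤ 0 → b ≠ (m : ℂ))
    (hc : ∀ m : ℤ, m ≤ 0 → c ≠ (m : ℂ)) (hd : ∀ m : ℤ, m ≤ 0 → d ≠ (m : ℂ))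
    (hz : (0 < z ∧ z < 1) ∨ (z = 1 ∧ (a + b - c - d).re < -1)) :
    let term : ℕ → ℕ → ℂ := fun n k =>
      Complex.Gamma (2 * (k : ℂ) + 2 * n + a) * Complex.Gamma (2 * (k : ℂ) - 2 * n + b) /
        (Complex.Gamma (2 * (k : ℂ) + c) * Complex.Gamma (2 * (k : ℂ) + d)) * (z : ℂ) ^ k
    let g₃ : ℕ → ℂ := fun n => ∑' j : ℕ, term n (n + j)
    (∀ n : ℕ, Summable (fun j : ℕ => ‖term n (n + j)‖)) ∧
    ∀ Ψ : ℝ, 16 * z < Ψ →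
      ∃ K > (0 : ℝ), ∃ N : ℕ, ∀ n ≥ N,
        ‖g₃ n‖ ≤ K * Ψ ^ n / min 1 (Metric.infDist b nonposInts) := by
  intro term g₃
  have hterm : ∀ n j : ℕ, term n (n+j) = trm a b c d z n j := by
    intro n j
    show Complex.Gamma (2 * ((n+j:ℕ) : ℂ) + 2 * n + a) *
        Complex.Gamma (2 * ((n+j:ℕ) : ℂ) - 2 * n + b) /
        (Complex.Gamma (2 * ((n+j:ℕ) : ℂ) + c) * Complex.Gamma (2 * ((n+j:ℕ) : ℂ) + d)) *
        (z : ℂ) ^ (n+j) = _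
    rw [trm]
    rw [show 2 * ((n+j:ℕ) : ℂ) + 2 * n + a = a + ((4*n+2*j:ℕ):ℂ) by push_cast; ring,
        show 2 * ((n+j:ℕ) : ℂ) - 2 * n + b = b + ((2*j:ℕ):ℂ) by push_cast; ring,
        show 2 * ((n+j:ℕ) : ℂ) + c = c + ((2*n+2*j:ℕ):ℂ) by push_cast; ring,
        show 2 * ((n+j:ℕ) : ℂ) + d = d + ((2*n+2*j:ℕ):ℂ) by push_cast; ring]
  have hz0 : 0 < z := by
    rcases hz with ⟨h, _⟩ | ⟨h, _⟩
    · exact h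
    · rw [h]; norm_num
  have hsum : ∀ n : ℕ, Summable (fun j : ℕ => Complex.abs (trm a b c d z n j)) := by
    intro n
    rcases hz with ⟨h1, h2⟩ | ⟨h1, h2⟩
    · exact summable_lt1 h1 h2 hb hc hd n
    · exact summable_eq1 h1 h2 hb hc hd n
  have hsum' : ∀ n : ℕ, Summable (fun j : ℕ => Complex.abs (term n (n + j))) := by
    intro n
    apply (hsum n).congr
    intro j
    rw [hterm]
  refine ⟨hsum', ?_⟩
  intro Ψ hΨ
  have hΨ0 : 0 < Ψ := lt_trans (by positivity) hΨ
  obtain ⟨N₀, hA⟩ := lemA a b c d z hz0 hc hd Ψ hΨ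
  set m : ℝ := min 1 (infDist b nonposInts) with hm
  have hm0 : 0 < m := lt_min one_pos (infDist_nonposInts_pos hb)
  have hm1 : m ≤ 1 := min_le_left _ _
  set S : ℝ := ∑' j : ℕ, Complex.abs (trm a b c d z N₀ j) with hS
  have hS0 : 0 ≤ S := tsum_nonneg (fun j => Complex.abs.nonneg _)
  have hpow : ∀ k : ℕ, ∀ j : ℕ,
      Complex.abs (trm a b c d z (N₀+k) j) ≤ Ψ^k * Complex.abs (trm a b c d z N₀ j) := by
    intro k
    induction k with
    | zero => intro j; simp
    | succ k ih =>
      intro j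
      calc Complex.abs (trm a b c d z ((N₀+k)+1) j)
          ≤ Ψ * Complex.abs (trm a b c d z (N₀+k) j) := hA (N₀+k) (by omega) j
        _ ≤ Ψ * (Ψ^k * Complex.abs (trm a b c d z N₀ j)) :=
            mul_le_mul_of_nonneg_left (ih j) hΨ0.le
        _ = Ψ^(k+1) * Complex.abs (trm a b c d z N₀ j) := by ring
  refine ⟨S / Ψ^N₀ + 1, by positivity, N₀, ?_⟩
  intro n hn
  obtain ⟨k, rfl⟩ : ∃ k, n = N₀ + k := ⟨n - N₀, by omega⟩
  have h1 : Complex.abs (g₃ (N₀+k)) ≤ ∑' j : ℕ, Complex.abs (term (N₀+k) ((N₀+k) + j)) := by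
    have := norm_tsum_le_tsum_norm (f := fun j : ℕ => term (N₀+k) ((N₀+k) + j)) ?_
    · exact this
    · exact hsum' (N₀+k)
  have h2 : ∑' j : ℕ, Complex.abs (term (N₀+k) ((N₀+k) + j)) ≤ Ψ^k * S := by
    rw [hS, ← tsum_mul_left]
    apply Summable.tsum_le_tsum _ (hsum' (N₀+k)) (((hsum N₀)).mul_left _)
    intro j
    rw [hterm]
    exact hpow k j
  have h3 : Ψ^k * S ≤ (S / Ψ^N₀ + 1) * Ψ^(N₀+k) := by
    have hp : (0:ℝ) < Ψ^N₀ := by positivity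
    have e : (S / Ψ^N₀ + 1) * Ψ^(N₀+k) = S * Ψ^k + Ψ^(N₀+k) := by
      rw [pow_add]
      field_simp
    rw [e]
    have := pow_pos hΨ0 (N₀+k)
    linarith
  have h4 : (S / Ψ^N₀ + 1) * Ψ^(N₀+k) ≤ (S / Ψ^N₀ + 1) * Ψ^(N₀+k) / m := by
    rw [le_div_iff₀ hm0]
    have hK : (0:ℝ) ≤ (S / Ψ^N₀ + 1) * Ψ^(N₀+k) := by positivity
    nlinarith
  exact le_trans h1 (by linarith)
end
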